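/- arXiv:2605.07538 — 2 statements merged into one kernel-verified Lean document; each statement's English description precedes it below -/
import Mathlib

section
/- Let ν̄ > 0 and η ∈ ℝ, and let Γ(y) = (e^{η/ν̄} − 1) e^{−y²} / ( √π + (e^{η/ν̄} − 1) ∫_y^{∞} e^{−ξ²} dξ ). Then for all y ∈ ℝ, |Γ(y)| ≤ π^{−1/2} (e^{|η|/ν̄} − 1) e^{|η|/ν̄} e^{−y²}. -/
open MeasureTheory Real

/- Write `t = η/ν̄` and `I(y) = ∫_y^∞ e^{-ξ²} dξ ∈ [0, √π]`. The numerator is bounded through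
`|e^t - 1| ≤ e^{|t|} - 1`, and the denominator `√π + (e^t - 1) I(y)` is at least `√π` if `t ≥ 0`
and at least `√π e^t` if `t < 0`, hence always at least `√π e^{-|t|}`. -/

theorem abs_exp_sub_one_le_exp_abs_sub_one (t : ℝ) : |exp t - 1| ≤ exp |t| - 1 := by
  rcases le_or_gt 0 t with ht | ht
  · rw [abs_of_nonneg ht, abs_of_nonneg (sub_nonneg.mpr (one_le_exp ht))]
  · rw [abs_of_neg ht, abs_of_neg (sub_neg.mpr (exp_lt_one_iff.mpr ht))]
    linarith [add_one_le_exp t, add_one_le_exp (-t)]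

theorem mul_exp_neg_abs_le_add_exp_sub_one_mul {S I : ℝ} (hI : 0 ≤ I) (hIS : I ≤ S) (t : ℝ) :
    S * exp (-|t|) ≤ S + (exp t - 1) * I := by
  rcases le_or_gt 0 t with ht | ht
  · have : exp (-|t|) ≤ 1 := exp_le_one_iff.mpr (neg_nonpos.mpr (abs_nonneg t))
    nlinarith [mul_nonneg (sub_nonneg.mpr (one_le_exp ht)) hI]
  · have : exp t - 1 < 0 := sub_neg.mpr (exp_lt_one_iff.mpr ht)
    rw [abs_of_neg ht, neg_neg]
    nlinarith

theorem integral_Ioi_exp_neg_sq_nonneg (y : ℝ) : 0 ≤ ∫ ξ in Set.Ioi y, exp (-ξ ^ 2) :=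
  setIntegral_nonneg measurableSet_Ioi fun _ _ ↦ (exp_pos _).le

theorem integral_Ioi_exp_neg_sq_le_sqrt_pi (y : ℝ) :
    ∫ ξ in Set.Ioi y, exp (-ξ ^ 2) ≤ √π := by
  have hint : Integrable fun ξ : ℝ ↦ exp (-ξ ^ 2) := by
    simpa using integrable_exp_neg_mul_sq one_pos
  calc ∫ ξ in Set.Ioi y, exp (-ξ ^ 2)
      ≤ ∫ ξ, exp (-ξ ^ 2) := setIntegral_le_integral hint (.of_forall fun _ ↦ (exp_pos _).le)
    _ = √π := by simpa using integral_gaussian 1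

theorem abs_hopf_cole_profile_le (t y : ℝ) :
    |(exp t - 1) * exp (-y ^ 2) / (√π + (exp t - 1) * ∫ ξ in Set.Ioi y, exp (-ξ ^ 2))| ≤
      π ^ (-(1 : ℝ) / 2) * (exp |t| - 1) * exp |t| * exp (-y ^ 2) := by
  set D := √π + (exp t - 1) * ∫ ξ in Set.Ioi y, exp (-ξ ^ 2)
  have hD : √π * exp (-|t|) ≤ D := mul_exp_neg_abs_le_add_exp_sub_one_mul
    (integral_Ioi_exp_neg_sq_nonneg y) (integral_Ioi_exp_neg_sq_le_sqrt_pi y) t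
  have hlow : 0 < √π * exp (-|t|) := mul_pos (sqrt_pos.mpr pi_pos) (exp_pos _)
  have hpi : π ^ (-(1 : ℝ) / 2) = (√π)⁻¹ := by
    rw [neg_div, rpow_neg pi_pos.le, ← sqrt_eq_rpow]
  calc |(exp t - 1) * exp (-y ^ 2) / D|
      = |exp t - 1| * exp (-y ^ 2) / D := by
        rw [abs_div, abs_mul, abs_of_pos (exp_pos _), abs_of_pos (hlow.trans_le hD)]
    _ ≤ (exp |t| - 1) * exp (-y ^ 2) / (√π * exp (-|t|)) := by
        gcongr
        · exact mul_nonneg ((abs_nonneg _).trans (abs_exp_sub_one_le_exp_abs_sub_one t))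
            (exp_pos _).le
        · exact abs_exp_sub_one_le_exp_abs_sub_one t
    _ = π ^ (-(1 : ℝ) / 2) * (exp |t| - 1) * exp |t| * exp (-y ^ 2) := by
        rw [hpi]
        field_simp
        rw [mul_right_comm, ← exp_add, add_neg_cancel, exp_zero, one_mul]

/-- Pointwise Gaussian bound for the Hopf–Cole diffusion-wave profile `Γ`. -/
theorem hopf_cole_profile_pointwise_bound (nu η : ℝ) (hnu : 0 < nu)
    (Γ : ℝ → ℝ)
    (hΓ : ∀ y : ℝ, Γ y =
      (Real.exp (η / nu) - 1) * Real.exp (-y ^ 2) /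
        (Real.sqrt Real.pi +
          (Real.exp (η / nu) - 1) * ∫ ξ in Set.Ioi y, Real.exp (-ξ ^ 2))) :
    ∀ y : ℝ,
      |Γ y| ≤ Real.pi ^ (-(1 : ℝ) / 2) * (Real.exp (|η| / nu) - 1) *
        Real.exp (|η| / nu) * Real.exp (-y ^ 2) := by
  intro y
  have habs : |η| / nu = |η / nu| := by rw [abs_div, abs_of_pos hnu]
  rw [hΓ y, habs]
  exact abs_hopf_cole_profile_le (η / nu) y
end

section
/- Let 0 < ν ≤ 1 and let m be the multiplier defined in the context. There is an absolute constant C (independent of ν, t, k, η, η', l, l') such that for all t ≥ 0, all k ∈ ℤ \ {0}, and all η, η', l, l' ∈ ℝ: | m(t,k,η,l)/m(t,k,η',l') − 1 | ≤ C · |(η−η', l−l')|/|k| · ⟨(η−η', l−l')/k⟩, where ⟨x⟩ = (1+|x|²)^{1/2}. Equivalently, |m(t,k,η,l) − m(t,k,η',l')| · |k| ≤ C m(t,k,η',l') |(η−η', l−l')| ⟨(η−η', l−l')⟩ whenever |k| ≥ 1. -/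
/-!
In the variables `p = η/k`, `w = l/k` the multiplier is `m = ‖(1, P p, w)‖² / ‖(1, P (p - t), w)‖²`,
where `P` is the projection of `ℝ` onto `[-1000 ν^(-1/3), 0]`. Since `P` is monotone, 1-Lipschitz
and nonpositive, replacing `(η, l)` by `(η', l')` moves each of the two norms by at most
`δ = |(η - η', l - l')| / |k|`, and the numerator never exceeds the denominator. For `x ≤ y` and
`x', y' ≥ 1` with `|x - x'|, |y - y'| ≤ δ`, the quotient `x y' / (x' y)` lies between `(1 + δ)⁻²` and
`1 + 2δ`; it is `x ≤ y` that keeps the upper bound linear in `δ`. Hence `|m/m' - 1| ≤ 4δ(1 + δ)`.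
-/

/-- The Fourier multiplier `m` from Definition 3.2 of the paper. -/
noncomputable def mMul (ν t : ℝ) (k : ℤ) (η l : ℝ) : ℝ :=
  if k = 0 then 1
  else if η / (k : ℝ) ≤ -1000 * ν ^ (-(1 : ℝ) / 3) then 1
  else if η / (k : ℝ) ≤ 0 then
    (if t < η / (k : ℝ) + 1000 * ν ^ (-(1 : ℝ) / 3) then
        ((k : ℝ) ^ 2 + η ^ 2 + l ^ 2) / ((k : ℝ) ^ 2 + (η - (k : ℝ) * t) ^ 2 + l ^ 2)
      else
        ((k : ℝ) ^ 2 + η ^ 2 + l ^ 2) /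
          ((k : ℝ) ^ 2 + (1000 * (k : ℝ) * ν ^ (-(1 : ℝ) / 3)) ^ 2 + l ^ 2))
  else
    (if t < η / (k : ℝ) then 1
     else if t < η / (k : ℝ) + 1000 * ν ^ (-(1 : ℝ) / 3) then
        ((k : ℝ) ^ 2 + l ^ 2) / ((k : ℝ) ^ 2 + (η - (k : ℝ) * t) ^ 2 + l ^ 2)
     else
        ((k : ℝ) ^ 2 + l ^ 2) /
          ((k : ℝ) ^ 2 + (1000 * (k : ℝ) * ν ^ (-(1 : ℝ) / 3)) ^ 2 + l ^ 2))

open Real Set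

lemma abs_sq_sub_one_le_of_bounds {s δ : ℝ} (hs : 0 ≤ s) (hδ : 0 ≤ δ) (hup : s ≤ 1 + 2 * δ)
    (hlow : 1 ≤ (1 + δ) ^ 2 * s) : |s ^ 2 - 1| ≤ 4 * δ * (1 + δ) := by
  rw [abs_le]
  constructor
  · rcases le_total 1 s with hge | hle
    · nlinarith
    · have hsub : 1 - s ≤ 2 * δ := by nlinarith [mul_nonneg hδ hδ, mul_nonneg (mul_nonneg hδ hδ) hs]
      nlinarith
  · nlinarith

lemma abs_sq_div_div_sq_div_sub_one_le {x x' y y' δ : ℝ} (hx : 1 ≤ x) (hx' : 1 ≤ x')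
    (hy' : 1 ≤ y') (hxy : x ≤ y) (hxx' : |x - x'| ≤ δ) (hyy' : |y - y'| ≤ δ) :
    |x ^ 2 / y ^ 2 / (x' ^ 2 / y' ^ 2) - 1| ≤ 4 * δ * (1 + δ) := by
  have hδ : 0 ≤ δ := (abs_nonneg _).trans hxx'
  obtain ⟨hxx'₁, hxx'₂⟩ := abs_le.1 hxx'
  obtain ⟨hyy'₁, hyy'₂⟩ := abs_le.1 hyy'
  have hden : 0 < x' * y := by nlinarith
  have hsq : x ^ 2 / y ^ 2 / (x' ^ 2 / y' ^ 2) = (x * y' / (x' * y)) ^ 2 := by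
    field_simp
  rw [hsq]
  refine abs_sq_sub_one_le_of_bounds (by positivity) hδ ?_ ?_
  · rw [div_le_iff₀ hden]
    have hy : 0 ≤ y := by linarith
    calc x * y' ≤ x * y + δ * x := by nlinarith
      _ ≤ x' * y + δ * y + δ * y := by nlinarith [mul_le_mul_of_nonneg_left hxy hδ]
      _ ≤ (1 + 2 * δ) * (x' * y) := by nlinarith [mul_le_mul_of_nonneg_right hx' hy]
  · rw [← mul_div_assoc, le_div_iff₀ hden]
    have hx'le : x' ≤ (1 + δ) * x := by nlinarith
    have hyle : y ≤ (1 + δ) * y' := by nlinarith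
    calc 1 * (x' * y) ≤ ((1 + δ) * x) * ((1 + δ) * y') := by
          rw [one_mul]; exact mul_le_mul hx'le hyle (by linarith) (by positivity)
      _ = (1 + δ) ^ 2 * (x * y') := by ring

lemma one_add_le_two_mul_sqrt_one_add_sq (x : ℝ) : 1 + x ≤ 2 * √(1 + x ^ 2) := by
  calc 1 + x ≤ √(2 ^ 2 * (1 + x ^ 2)) := le_sqrt_of_sq_le (by nlinarith [sq_nonneg (x - 1)])
    _ = 2 * √(1 + x ^ 2) := by rw [sqrt_mul (by positivity), sqrt_sq zero_le_two]

noncomputable def symbolVec (u w : ℝ) : EuclideanSpace ℝ (Fin 3) := !₂[1, u, w]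

lemma norm_symbolVec_sq (u w : ℝ) : ‖symbolVec u w‖ ^ 2 = 1 + u ^ 2 + w ^ 2 := by
  simp [symbolVec, EuclideanSpace.norm_sq_eq, Fin.sum_univ_three]

lemma one_le_norm_symbolVec (u w : ℝ) : 1 ≤ ‖symbolVec u w‖ := by
  have := norm_symbolVec_sq u w
  nlinarith [norm_nonneg (symbolVec u w), sq_nonneg u, sq_nonneg w]

lemma norm_symbolVec_le_norm_symbolVec {u v : ℝ} (h : |u| ≤ |v|) (w : ℝ) :
    ‖symbolVec u w‖ ≤ ‖symbolVec v w‖ := by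
  refine (pow_le_pow_iff_left₀ (norm_nonneg _) (norm_nonneg _) two_ne_zero).1 ?_
  rw [norm_symbolVec_sq, norm_symbolVec_sq]
  linarith [sq_le_sq.2 h]

lemma norm_symbolVec_sub_le {u u' p p' : ℝ} (h : |u - u'| ≤ |p - p'|) (w w' : ℝ) :
    ‖symbolVec u w - symbolVec u' w'‖ ≤ √((p - p') ^ 2 + (w - w') ^ 2) := by
  have hsq : ‖symbolVec u w - symbolVec u' w'‖ ^ 2 = (u - u') ^ 2 + (w - w') ^ 2 := by
    simp [symbolVec, EuclideanSpace.norm_sq_eq, Fin.sum_univ_three]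
  rw [← sqrt_sq (norm_nonneg _), hsq]
  exact sqrt_le_sqrt (by linarith [sq_le_sq.2 h])

lemma mMul_eq_norm_symbolVec_sq_div {ν t : ℝ} {k : ℤ} (hR : 0 ≤ 1000 * ν ^ (-(1 : ℝ) / 3))
    (ht : 0 ≤ t) (hk : k ≠ 0) (η l : ℝ) :
    mMul ν t k η l =
      ‖symbolVec (projIcc (-(1000 * ν ^ (-(1 : ℝ) / 3))) 0 (neg_nonpos.2 hR) (η / k)) (l / k)‖ ^ 2 /
        ‖symbolVec (projIcc (-(1000 * ν ^ (-(1 : ℝ) / 3))) 0 (neg_nonpos.2 hR) (η / k - t))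
          (l / k)‖ ^ 2 := by
  rw [norm_symbolVec_sq, norm_symbolVec_sq]
  unfold mMul
  generalize ν ^ (-(1 : ℝ) / 3) = ρ at *
  rw [if_neg hk]
  split_ifs with hfar hnonpos hbefore hbefore' hduring
  · rw [projIcc_of_le_left _ (by linarith), projIcc_of_le_left _ (by linarith)]
    exact (div_self (by positivity)).symm
  · rw [projIcc_of_mem _ ⟨by linarith, hnonpos⟩, projIcc_of_mem _ ⟨by linarith, by linarith⟩]
    field_simp
  · rw [projIcc_of_mem _ ⟨by linarith, hnonpos⟩, projIcc_of_le_left _ (by linarith)]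
    field_simp
  · rw [projIcc_of_right_le _ (by linarith), projIcc_of_right_le _ (by linarith)]
    exact (div_self (by positivity)).symm
  · rw [projIcc_of_right_le _ (by linarith), projIcc_of_mem _ ⟨by linarith, by linarith⟩]
    field_simp
    ring
  · rw [projIcc_of_right_le _ (by linarith), projIcc_of_le_left _ (by linarith)]
    field_simp
    ring

lemma mMul_pos {ν t : ℝ} {k : ℤ} (hR : 0 ≤ 1000 * ν ^ (-(1 : ℝ) / 3)) (ht : 0 ≤ t) (hk : k ≠ 0)
    (η l : ℝ) : 0 < mMul ν t k η l := by
  rw [mMul_eq_norm_symbolVec_sq_div hR ht hk]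
  have hnorm_pos (u w : ℝ) : 0 < ‖symbolVec u w‖ ^ 2 :=
    pow_pos (zero_lt_one.trans_le (one_le_norm_symbolVec u w)) 2
  exact div_pos (hnorm_pos _ _) (hnorm_pos _ _)

lemma abs_mMul_div_mMul_sub_one_le {ν t : ℝ} {k : ℤ} (hR : 0 ≤ 1000 * ν ^ (-(1 : ℝ) / 3))
    (ht : 0 ≤ t) (hk : k ≠ 0) (η η' l l' : ℝ) :
    |mMul ν t k η l / mMul ν t k η' l' - 1| ≤
      4 * (√((η - η') ^ 2 + (l - l') ^ 2) / |(k : ℝ)|) *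
        (1 + √((η - η') ^ 2 + (l - l') ^ 2) / |(k : ℝ)|) := by
  have hscale : √((η / k - η' / k) ^ 2 + (l / k - l' / k) ^ 2) =
      √((η - η') ^ 2 + (l - l') ^ 2) / |(k : ℝ)| := by
    rw [← sqrt_sq_eq_abs, ← sqrt_div' _ (sq_nonneg _)]
    congr 1
    field_simp
  set P := projIcc (-(1000 * ν ^ (-(1 : ℝ) / 3))) 0 (neg_nonpos.2 hR)
  have hP_lip (p p' : ℝ) : |(P p : ℝ) - P p'| ≤ |p - p'| := abs_projIcc_sub_projIcc _
  have hP_abs_le (p : ℝ) : |(P p : ℝ)| ≤ |(P (p - t) : ℝ)| := by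
    have hmono : (P (p - t) : ℝ) ≤ P p :=
      Subtype.coe_le_coe.2 (monotone_projIcc _ (by linarith))
    have hnonpos : (P p : ℝ) ≤ 0 := (P p).2.2
    rw [abs_of_nonpos hnonpos, abs_of_nonpos (hmono.trans hnonpos)]
    linarith
  rw [mMul_eq_norm_symbolVec_sq_div hR ht hk, mMul_eq_norm_symbolVec_sq_div hR ht hk, ← hscale]
  refine abs_sq_div_div_sq_div_sub_one_le (one_le_norm_symbolVec _ _) (one_le_norm_symbolVec _ _)
    (one_le_norm_symbolVec _ _) (norm_symbolVec_le_norm_symbolVec (hP_abs_le _) _) ?_ ?_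
  · exact (abs_norm_sub_norm_le _ _).trans (norm_symbolVec_sub_le (hP_lip _ _) _ _)
  · refine (abs_norm_sub_norm_le _ _).trans (norm_symbolVec_sub_le ?_ _ _)
    simpa only [sub_sub_sub_cancel_right] using hP_lip (η / k - t) (η' / k - t)

lemma abs_mMul_sub_mMul_mul_abs_le {ν t : ℝ} {k : ℤ} (hR : 0 ≤ 1000 * ν ^ (-(1 : ℝ) / 3))
    (ht : 0 ≤ t) (hk : k ≠ 0) (η η' l l' : ℝ) :
    |mMul ν t k η l - mMul ν t k η' l'| * |(k : ℝ)| ≤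
      8 * mMul ν t k η' l' * √((η - η') ^ 2 + (l - l') ^ 2) *
        √(1 + ((η - η') ^ 2 + (l - l') ^ 2)) := by
  have hratio := abs_mMul_div_mMul_sub_one_le hR ht hk η η' l l'
  have hm' := mMul_pos hR ht hk η' l'
  set S := (η - η') ^ 2 + (l - l') ^ 2
  have hS : 0 ≤ S := by positivity
  set δ := √S / |(k : ℝ)|
  have hk1 : (1 : ℝ) ≤ |(k : ℝ)| := by exact_mod_cast Int.one_le_abs hk
  have hone_add : 1 + δ ≤ 2 * √(1 + S) := by
    simpa only [sq_sqrt hS] using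
      (add_le_add_right (div_le_self (sqrt_nonneg S) hk1) 1).trans
        (one_add_le_two_mul_sqrt_one_add_sq √S)
  have hsub : mMul ν t k η l - mMul ν t k η' l' =
      mMul ν t k η' l' * (mMul ν t k η l / mMul ν t k η' l' - 1) := by
    field_simp
  calc |mMul ν t k η l - mMul ν t k η' l'| * |(k : ℝ)|
      = mMul ν t k η' l' * |mMul ν t k η l / mMul ν t k η' l' - 1| * |(k : ℝ)| := by
        rw [hsub, abs_mul, abs_of_pos hm']
    _ ≤ mMul ν t k η' l' * (4 * δ * (1 + δ)) * |(k : ℝ)| := by gcongr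
    _ = 4 * mMul ν t k η' l' * √S * (1 + δ) := by
        simp only [δ]; field_simp
    _ ≤ 4 * mMul ν t k η' l' * √S * (2 * √(1 + S)) := by gcongr
    _ = 8 * mMul ν t k η' l' * √S * √(1 + S) := by ring

/-- Commutator estimate for the multiplier `m` (Proposition 3.3, estimate (A.1)):
the ratio `m(t,k,η,l)/m(t,k,η',l')` is close to `1` up to
`C |(η-η',l-l')|/|k| · ⟨(η-η',l-l')/k⟩`, uniformly in `ν ∈ (0,1]`, `t ≥ 0`, `k ≠ 0`. -/
theorem mMul_commutator_estimate :
    ∃ C > (0 : ℝ), ∀ ν : ℝ, 0 < ν → ν ≤ 1 → ∀ t : ℝ, 0 ≤ t → ∀ k : ℤ, k ≠ 0 →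
      ∀ η η' l l' : ℝ,
        |mMul ν t k η l / mMul ν t k η' l' - 1| ≤
          C * (Real.sqrt ((η - η') ^ 2 + (l - l') ^ 2) / |(k : ℝ)|) *
            Real.sqrt (1 + ((η - η') ^ 2 + (l - l') ^ 2) / (k : ℝ) ^ 2) ∧
        |mMul ν t k η l - mMul ν t k η' l'| * |(k : ℝ)| ≤
          C * mMul ν t k η' l' * Real.sqrt ((η - η') ^ 2 + (l - l') ^ 2) *
            Real.sqrt (1 + ((η - η') ^ 2 + (l - l') ^ 2)) := by
  refine ⟨8, by norm_num, fun ν hν _ t ht k hk η η' l l' => ?_⟩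
  have hR : 0 ≤ 1000 * ν ^ (-(1 : ℝ) / 3) := by positivity
  refine ⟨?_, abs_mMul_sub_mMul_mul_abs_le hR ht hk η η' l l'⟩
  set S := (η - η') ^ 2 + (l - l') ^ 2
  set δ := √S / |(k : ℝ)|
  have hδ_sq : δ ^ 2 = S / (k : ℝ) ^ 2 := by rw [div_pow, sq_sqrt (by positivity), sq_abs]
  calc |mMul ν t k η l / mMul ν t k η' l' - 1| ≤ 4 * δ * (1 + δ) :=
        abs_mMul_div_mMul_sub_one_le hR ht hk η η' l l'
    _ ≤ 4 * δ * (2 * √(1 + δ ^ 2)) := by gcongr; exact one_add_le_two_mul_sqrt_one_add_sq δ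
    _ = 8 * δ * √(1 + S / (k : ℝ) ^ 2) := by rw [hδ_sq]; ring
end
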